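/- Let (c_j) with c_0 = 1 satisfy Σ_{x+y=n} x c_x c_y = n c_n + 2 c_{n-2} for all n ≥ 1, let S_n(k) = Σ_{j_1+...+j_k=n} c_{j_1}···c_{j_k}, let d_n = n!! c_n (double factorial), let [n choose k] denote Stirling cycle numbers and [n choose k]* the modified Stirling cycle numbers. Then for all integers n ≥ 0 and k ≥ 1: n!! · S_n(k)/k = Σ_{j=0}^{k-1} 2^j ([k choose k-j] d_{n-2j} - [k choose k-j]* δ_{n-2j,0}). -/

import Mathlib

/-- Double factorial with 0!! = 1, 1!! = 1, n!! = n·(n-2)!!. -/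
def dfac : ℕ → ℕ
  | 0 => 1
  | 1 => 1
  | n + 2 => (n + 2) * dfac n

/-- Stirling cycle numbers. -/
def stirCycle : ℕ → ℤ → ℝ
  | 0, k => if k = 0 then 1 else 0
  | n+1, k => stirCycle n (k - 1) + (n : ℝ) * stirCycle n k

/-- S_n(k) = Σ_{j_1+⋯+j_k = n} c_{j_1}⋯c_{j_k}. -/
def Sfun (c : ℕ → ℝ) (n k : ℕ) : ℝ :=
  ∑ p ∈ Finset.Nat.antidiagonalTuple k n, ∏ i, c (p i)

/-!
With `C = ∑ cₙ xⁿ` the hypothesis on `c` reads `x C' C = x C' + 2 x² C`. Multiplying by `C^(k-1)`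
and using `x (C^(k+1))' = (k+1) C^k · x C'` shows that `Tₖ(n) = n!! Sₙ(k) / k` satisfies
`Tₖ₊₁(n) = Tₖ(n) + 2k Tₖ(n-2)` for `n ≥ 1`. The Stirling recurrence gives the same recurrence for
the right-hand side, and the two sides agree for `k = 1` and for `n = 0`; there the modified
numbers contribute `1 - (k-1)/k = 1/k`.
-/

open PowerSeries

lemma Sfun_eq_coeff_pow (c : ℕ → ℝ) (n k : ℕ) : Sfun c n k = coeff n (mk c ^ k) := by
  have hsupp : Finset.finsuppAntidiag Finset.univ n
      = (Finset.Nat.antidiagonalTuple k n).map Finsupp.equivFunOnFinite.symm.toEmbedding := by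
    ext f
    simp [Finset.Nat.mem_antidiagonalTuple]
  rw [← Fin.prod_const, coeff_prod, hsupp, Finset.sum_map]
  simp [Sfun]

lemma Sfun_zero_left (c : ℕ → ℝ) (h0 : c 0 = 1) (k : ℕ) : Sfun c 0 k = 1 := by
  simp [Sfun, Finset.Nat.antidiagonalTuple_zero_right, h0]

lemma Sfun_one_right (c : ℕ → ℝ) (n : ℕ) : Sfun c n 1 = c n := by
  simp [Sfun]

lemma coeff_X_mul_derivative {R : Type*} [CommSemiring R] (f : R⟦X⟧) (n : ℕ) :
    coeff n (X * d⁄dX R f) = n * coeff n f := by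
  cases n with
  | zero => simp
  | succ m => rw [coeff_succ_X_mul, coeff_derivative]; push_cast; ring

lemma natCast_mul_Sfun_succ (c : ℕ → ℝ) (n k : ℕ) :
    n * Sfun c n (k + 1) = (k + 1) * coeff n (X * d⁄dX ℝ (mk c) * mk c ^ k) := by
  rw [Sfun_eq_coeff_pow, ← coeff_X_mul_derivative, derivative_pow, ← coeff_C_mul]
  congr 1
  rw [add_tsub_cancel_right, map_add, map_natCast, map_one]
  push_cast
  ring

lemma X_mul_derivative_mul_eq (c : ℕ → ℝ)
    (hrec : ∀ n : ℕ, 1 ≤ n →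
      ∑ p ∈ Finset.HasAntidiagonal.antidiagonal n, (p.1 : ℝ) * c p.1 * c p.2
        = (n : ℝ) * c n + 2 * (if 2 ≤ n then c (n - 2) else 0)) :
    X * d⁄dX ℝ (mk c) * mk c = X * d⁄dX ℝ (mk c) + C 2 * (X ^ 2 * mk c) := by
  ext n
  rw [map_add, coeff_C_mul, coeff_X_pow_mul', coeff_mul]
  simp only [coeff_X_mul_derivative, coeff_mk]
  rcases Nat.eq_zero_or_pos n with rfl | hn
  · simp
  · exact hrec n hn

lemma Sfun_succ_div (c : ℕ → ℝ)
    (hC : X * d⁄dX ℝ (mk c) * mk c = X * d⁄dX ℝ (mk c) + C 2 * (X ^ 2 * mk c))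
    (n : ℕ) {k : ℕ} (hk : 1 ≤ k) :
    n * Sfun c n (k + 1) / (k + 1)
      = n * Sfun c n k / k + 2 * (if 2 ≤ n then Sfun c (n - 2) k else 0) := by
  obtain ⟨m, rfl⟩ := Nat.exists_eq_add_of_le' hk
  have hD : X * d⁄dX ℝ (mk c) * mk c ^ (m + 1)
      = X * d⁄dX ℝ (mk c) * mk c ^ m + C 2 * (X ^ 2 * mk c ^ (m + 1)) := by
    linear_combination mk c ^ m * hC
  have hcoeff := congrArg (coeff n) hD
  rw [map_add, coeff_C_mul, coeff_X_pow_mul', ← Sfun_eq_coeff_pow] at hcoeff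
  rw [natCast_mul_Sfun_succ, natCast_mul_Sfun_succ, hcoeff]
  push_cast
  field_simp

lemma dfac_eq_mul {n : ℕ} (hn : 1 ≤ n) : dfac n = n * dfac (n - 2) := by
  obtain _ | _ | n := n
  · omega
  · rfl
  · rfl

lemma dfac_mul_Sfun_succ (c : ℕ → ℝ)
    (hC : X * d⁄dX ℝ (mk c) * mk c = X * d⁄dX ℝ (mk c) + C 2 * (X ^ 2 * mk c))
    {n k : ℕ} (hn : 1 ≤ n) (hk : 1 ≤ k) :
    dfac n * Sfun c n (k + 1) / (k + 1)
      = dfac n * Sfun c n k / k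
        + 2 * k * (if 2 ≤ n then dfac (n - 2) * Sfun c (n - 2) k / k else 0) := by
  have h := congrArg (· * (dfac (n - 2) : ℝ)) (Sfun_succ_div c hC n hk)
  have hk0 : (k : ℝ) ≠ 0 := by positivity
  rw [dfac_eq_mul hn]
  split_ifs at h ⊢ <;> push_cast <;> field_simp at h ⊢ <;> linear_combination h

section StirlingSum

variable (σ : ℕ → ℤ → ℝ)

def stirlingSum (k : ℕ) (a : ℕ → ℝ) : ℝ :=
  ∑ j ∈ Finset.range k, 2 ^ j * σ k (k - j) * a j

variable {σ}

lemma eq_zero_of_nonpos_of_recurrence (hσ : ∀ m i, σ (m + 1) i = σ m (i - 1) + m * σ m i)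
    {m₀ : ℕ} (h₀ : ∀ i ≤ 0, σ m₀ i = 0) {m : ℕ} (hm : m₀ ≤ m) {i : ℤ} (hi : i ≤ 0) :
    σ m i = 0 := by
  induction m, hm using Nat.le_induction generalizing i with
  | base => exact h₀ i hi
  | succ m _ ih => rw [hσ, ih (by omega), ih hi, mul_zero, add_zero]

lemma stirlingSum_succ (hσ : ∀ m i, σ (m + 1) i = σ m (i - 1) + m * σ m i) {k : ℕ}
    (hk : σ k 0 = 0) (a : ℕ → ℝ) :
    stirlingSum σ (k + 1) a
      = stirlingSum σ k a + k * (σ k (k + 1) * a 0 + 2 * stirlingSum σ k (fun j => a (j + 1))) := by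
  have hsplit : ∀ j : ℕ, 2 ^ j * σ (k + 1) ((k + 1 : ℕ) - j) * a j
      = 2 ^ j * σ k (k - j) * a j + k * (2 ^ j * σ k (k + 1 - j) * a j) := by
    intro j
    rw [hσ]
    push_cast
    ring_nf
  simp only [stirlingSum, hsplit, Finset.sum_add_distrib, ← Finset.mul_sum]
  rw [Finset.sum_range_succ, Finset.sum_range_succ', sub_self, hk, Finset.mul_sum]
  have hshift : ∑ j ∈ Finset.range k, 2 ^ (j + 1) * σ k (k + 1 - (j + 1 : ℕ)) * a (j + 1)
      = ∑ j ∈ Finset.range k, 2 * (2 ^ j * σ k (k - j) * a (j + 1)) :=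
    Finset.sum_congr rfl fun j _ => by push_cast; ring_nf
  rw [hshift]
  push_cast
  ring_nf

end StirlingSum

lemma stirCycle_succ (n : ℕ) (k : ℤ) :
    stirCycle (n + 1) k = stirCycle n (k - 1) + n * stirCycle n k := rfl

lemma stirCycle_eq_zero_of_lt {n : ℕ} {k : ℤ} (h : n < k) : stirCycle n k = 0 := by
  induction n generalizing k with
  | zero => simp [stirCycle, show k ≠ 0 by omega]
  | succ n ih => rw [stirCycle_succ, ih (by omega), ih (by omega), mul_zero, add_zero]

lemma stirCycle_self (n : ℕ) : stirCycle n n = 1 := by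
  induction n with
  | zero => rfl
  | succ n ih =>
    rw [stirCycle_succ, Nat.cast_succ, add_sub_cancel_right, ih,
      stirCycle_eq_zero_of_lt (by omega), mul_zero, add_zero]

lemma stirCycle_eq_zero_of_nonpos {n : ℕ} (hn : 1 ≤ n) {k : ℤ} (hk : k ≤ 0) :
    stirCycle n k = 0 :=
  eq_zero_of_nonpos_of_recurrence stirCycle_succ
    (fun i hi => by simp [stirCycle, show i - 1 ≠ 0 by omega]) hn hk

/-- `dShift c n j = d_{n-2j}` and `deltaShift n j = δ_{n-2j,0}`, where `d_m = m!! c_m` and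
`d_m = 0` for `m < 0`. -/
def dShift (c : ℕ → ℝ) (n j : ℕ) : ℝ :=
  if 2 * j ≤ n then dfac (n - 2 * j) * c (n - 2 * j) else 0

def deltaShift (n j : ℕ) : ℝ :=
  if n = 2 * j then 1 else 0

lemma dShift_succ (c : ℕ → ℝ) (n j : ℕ) :
    dShift c n (j + 1) = if 2 ≤ n then dShift c (n - 2) j else 0 := by
  unfold dShift
  split_ifs <;> first | rfl | omega | rw [show n - 2 * (j + 1) = n - 2 - 2 * j by omega]

lemma deltaShift_succ (n j : ℕ) :
    deltaShift n (j + 1) = if 2 ≤ n then deltaShift (n - 2) j else 0 := by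
  unfold deltaShift
  split_ifs <;> first | rfl | omega

lemma stirlingSum_ite (σ : ℕ → ℤ → ℝ) (k : ℕ) (p : Prop) [Decidable p] (a : ℕ → ℝ) :
    stirlingSum σ k (fun j => if p then a j else 0) = if p then stirlingSum σ k a else 0 := by
  split_ifs <;> simp [stirlingSum]

def stirlingRhs (c : ℕ → ℝ) (Sstar : ℕ → ℤ → ℝ) (n k : ℕ) : ℝ :=
  stirlingSum stirCycle k (dShift c n) - stirlingSum Sstar k (deltaShift n)

lemma stirlingRhs_succ (c : ℕ → ℝ) {Sstar : ℕ → ℤ → ℝ}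
    (hSrec : ∀ m i, Sstar (m + 1) i = Sstar m (i - 1) + m * Sstar m i)
    {n k : ℕ} (hS : Sstar k 0 = 0) (hn : 1 ≤ n) (hk : 1 ≤ k) :
    stirlingRhs c Sstar n (k + 1)
      = stirlingRhs c Sstar n k
        + 2 * k * (if 2 ≤ n then stirlingRhs c Sstar (n - 2) k else 0) := by
  have hδ : deltaShift n 0 = 0 := if_neg (by omega)
  simp only [stirlingRhs, stirlingSum_succ stirCycle_succ (stirCycle_eq_zero_of_nonpos hk le_rfl),
    stirlingSum_succ hSrec hS, stirCycle_eq_zero_of_lt (lt_add_one (k : ℤ)),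
    dShift_succ, deltaShift_succ, stirlingSum_ite, hδ]
  split_ifs <;> ring

lemma stirlingSum_eq_single_zero {σ : ℕ → ℤ → ℝ} {k : ℕ} (hk : 1 ≤ k) {a : ℕ → ℝ}
    (ha : ∀ j, j ≠ 0 → a j = 0) : stirlingSum σ k a = σ k k * a 0 := by
  rw [stirlingSum, Finset.sum_eq_single_of_mem 0 (Finset.mem_range.mpr hk)
    fun j _ hj => by rw [ha j hj, mul_zero]]
  simp

lemma stirlingRhs_one (c : ℕ → ℝ) {Sstar : ℕ → ℤ → ℝ} (hS : Sstar 1 1 = 0) (n : ℕ) :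
    stirlingRhs c Sstar n 1 = dfac n * c n := by
  have hs : stirCycle 1 1 = 1 := stirCycle_self 1
  simp [stirlingRhs, stirlingSum, hs, hS, dShift]

lemma stirlingRhs_zero_left {c : ℕ → ℝ} (h0 : c 0 = 1) {Sstar : ℕ → ℤ → ℝ} {k : ℕ} (hk : 1 ≤ k)
    (hS : Sstar k k = ((k : ℝ) - 1) / k) : stirlingRhs c Sstar 0 k = 1 / k := by
  rw [stirlingRhs, stirlingSum_eq_single_zero (a := dShift c 0) hk fun j hj => if_neg (by omega),
    stirlingSum_eq_single_zero (a := deltaShift 0) hk fun j hj => if_neg (by omega),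
    stirCycle_self, hS]
  have hk0 : (k : ℝ) ≠ 0 := by positivity
  simp [dShift, deltaShift, dfac, h0]
  field_simp
  ring

lemma eq_of_recurrence {f g : ℕ → ℕ → ℝ}
    (hf : ∀ n k, 1 ≤ n → 1 ≤ k →
      f n (k + 1) = f n k + 2 * k * (if 2 ≤ n then f (n - 2) k else 0))
    (hg : ∀ n k, 1 ≤ n → 1 ≤ k →
      g n (k + 1) = g n k + 2 * k * (if 2 ≤ n then g (n - 2) k else 0))
    (h_one : ∀ n, f n 1 = g n 1) (h_zero : ∀ k, 1 ≤ k → f 0 k = g 0 k)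
    (n : ℕ) {k : ℕ} (hk : 1 ≤ k) : f n k = g n k := by
  induction k, hk using Nat.le_induction generalizing n with
  | base => exact h_one n
  | succ k hk ih =>
    rcases Nat.eq_zero_or_pos n with rfl | hn
    · exact h_zero _ (by omega)
    · rw [hf n k hn hk, hg n k hn hk, ih n, ih (n - 2)]

theorem stmt9 (c : ℕ → ℝ) (Sstar : ℕ → ℤ → ℝ)
    (h0 : c 0 = 1)
    (hrec : ∀ n : ℕ, 1 ≤ n →
      ∑ p ∈ Finset.HasAntidiagonal.antidiagonal n, (p.1 : ℝ) * c p.1 * c p.2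
        = (n : ℝ) * c n + 2 * (if 2 ≤ n then c (n - 2) else 0))
    (hSrec : ∀ (m : ℕ) (k : ℤ), Sstar (m + 1) k = Sstar m (k - 1) + (m : ℝ) * Sstar m k)
    (hS0 : ∀ k : ℤ, k ≤ 0 → Sstar 0 k = 0)
    (hSdiag : ∀ m : ℕ, 1 ≤ m → Sstar m (m : ℤ) = ((m : ℝ) - 1) / m)
    (n k : ℕ) (hk : 1 ≤ k) :
    (dfac n : ℝ) * Sfun c n k / k
      = ∑ j ∈ Finset.range k, (2 : ℝ) ^ j *
          (stirCycle k ((k : ℤ) - j) *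
              (if 2 * j ≤ n then (dfac (n - 2 * j) : ℝ) * c (n - 2 * j) else 0)
            - Sstar k ((k : ℤ) - j) * (if n = 2 * j then 1 else 0)) := by
  have hSstar (m : ℕ) : Sstar m 0 = 0 :=
    eq_zero_of_nonpos_of_recurrence hSrec hS0 (Nat.zero_le m) le_rfl
  have h_one (n : ℕ) : (dfac n : ℝ) * Sfun c n 1 / (1 : ℕ) = stirlingRhs c Sstar n 1 := by
    rw [stirlingRhs_one c (by simpa using hSdiag 1 le_rfl), Sfun_one_right, Nat.cast_one, div_one]
  have h_zero (k : ℕ) (hk : 1 ≤ k) : (dfac 0 : ℝ) * Sfun c 0 k / k = stirlingRhs c Sstar 0 k := by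
    rw [stirlingRhs_zero_left h0 hk (hSdiag k hk), Sfun_zero_left c h0, dfac, Nat.cast_one, one_mul]
  have key := eq_of_recurrence (f := fun n k => (dfac n : ℝ) * Sfun c n k / k)
    (fun n k hn hk => by push_cast; exact dfac_mul_Sfun_succ c (X_mul_derivative_mul_eq c hrec) hn hk)
    (fun n k hn hk => stirlingRhs_succ c hSrec (hSstar k) hn hk) h_one h_zero n hk
  rw [key, stirlingRhs, stirlingSum, stirlingSum, ← Finset.sum_sub_distrib]
  refine Finset.sum_congr rfl fun j _ => ?_
  rw [dShift, deltaShift]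
  ring
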